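/- Let G:[0,1]²→ℝ be bounded and Lipschitz continuous. For each N ∈ ℕ let Q^N = (Q^{1,N},…,Q^{N,N}) solve the ODE system d/dt Q^{i,N}(t) = −(1/N) Σ_{j=1}^N G(j/N, i/N) Q^{j,N}(t) with Q^{i,N}(T) = 1, and let Q:[0,T]×[0,1]→ℝ be the bounded solution of Q(t,u) = 1 + ∫_t^T ∫_0^1 G(v,u) Q(s,v) dv ds. Then there exists C > 0 independent of N such that max_{1≤i≤N} sup_{t∈[0,T]} |Q(t, i/N) − Q^{i,N}(t)| ≤ C/N. -/

import Mathlib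

/-!
On the grid `uᵢ = (i + 1) / N` the limit `Q` is an approximate solution of the `N`-particle
system. Indeed `Q(s, ·)` is Lipschitz on `[0, 1]`, as can be read off from the integral equation,
so `v ↦ G(v, uᵢ) Q(s, v)` is Lipschitz and its right-endpoint Riemann sum is within `Λ / N` of
`∫₀¹ G(v, uᵢ) Q(s, v) dv`. Both systems take the value `1` at time `T`, so Grönwall's inequality,
applied in reversed time `τ = T - t` to the averaged linear vector field (Lipschitz in the sup
norm with constant `sup |G|`), bounds the difference by `gronwallBound 0 (sup |G|) (Λ / N) T`,
which is linear in `Λ / N`.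
-/

open MeasureTheory intervalIntegral Set

open scoped NNReal

theorem abs_integral_sub_mul_right_le {h : ℝ → ℝ} {Λ : ℝ≥0} {a b : ℝ} (hab : a ≤ b)
    (hh : LipschitzOnWith Λ h (Icc a b)) :
    |(∫ x in a..b, h x) - (b - a) * h b| ≤ Λ * (b - a) ^ 2 := by
  have hint : IntervalIntegrable h volume a b :=
    hh.continuousOn.intervalIntegrable_of_Icc hab
  have hpt : ∀ x ∈ uIoc a b, ‖h x - h b‖ ≤ Λ * (b - a) := by
    intro x hx
    rw [uIoc_of_le hab] at hx
    have hxb := hh.dist_le_mul x (Ioc_subset_Icc_self hx) b (right_mem_Icc.2 hab)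
    rw [Real.dist_eq, Real.dist_eq, abs_sub_comm x b, abs_of_nonneg (sub_nonneg.2 hx.2)] at hxb
    rw [Real.norm_eq_abs]
    exact hxb.trans (by gcongr; exact hx.1.le)
  calc |(∫ x in a..b, h x) - (b - a) * h b| = ‖∫ x in a..b, (h x - h b)‖ := by
        rw [integral_sub hint intervalIntegrable_const, intervalIntegral.integral_const,
          smul_eq_mul, Real.norm_eq_abs]
    _ ≤ Λ * (b - a) * |b - a| := norm_integral_le_of_norm_le_const hpt
    _ = Λ * (b - a) ^ 2 := by rw [abs_of_nonneg (sub_nonneg.2 hab)]; ring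

theorem abs_integral_sub_riemannSum_le {h : ℝ → ℝ} {Λ : ℝ≥0}
    (hh : LipschitzOnWith Λ h (Icc 0 1)) {N : ℕ} (hN : 0 < N) :
    |(∫ x in (0:ℝ)..1, h x) - 1 / N * ∑ j : Fin N, h (((j : ℕ) + 1) / N)| ≤ Λ / N := by
  have hN' : (0 : ℝ) < N := Nat.cast_pos.2 hN
  set a : ℕ → ℝ := fun k => k / N with ha
  have ha_mono : Monotone a := fun k l hkl => by simp only [ha]; gcongr
  have hcell : ∀ k < N, Icc (a k) (a (k + 1)) ⊆ Icc 0 1 := fun k hk =>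
    Icc_subset_Icc (by positivity) (div_le_one_of_le₀ (by exact_mod_cast hk) hN'.le)
  have hint : ∀ k < N, IntervalIntegrable h volume (a k) (a (k + 1)) := fun k hk =>
    (hh.continuousOn.mono (hcell k hk)).intervalIntegrable_of_Icc (ha_mono k.le_succ)
  have hsum : ∑ k ∈ Finset.range N, ∫ x in a k..a (k + 1), h x = ∫ x in (0:ℝ)..1, h x := by
    rw [sum_integral_adjacent_intervals hint]
    simp [ha, hN'.ne']
  have hriemann : 1 / N * ∑ j : Fin N, h (((j : ℕ) + 1) / N)
      = ∑ k ∈ Finset.range N, (a (k + 1) - a k) * h (a (k + 1)) := by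
    rw [Finset.mul_sum, Fin.sum_univ_eq_sum_range (fun k => 1 / N * h ((k + 1) / N)) N]
    refine Finset.sum_congr rfl fun k _ => ?_
    simp only [ha]
    push_cast
    ring
  rw [← hsum, hriemann, ← Finset.sum_sub_distrib]
  calc _ ≤ ∑ k ∈ Finset.range N,
          |(∫ x in a k..a (k + 1), h x) - (a (k + 1) - a k) * h (a (k + 1))| :=
        Finset.abs_sum_le_sum_abs _ _
    _ ≤ ∑ k ∈ Finset.range N, (Λ * (1 / N) ^ 2 : ℝ) := by
        refine Finset.sum_le_sum fun k hk => ?_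
        have hk := Finset.mem_range.1 hk
        have hstep : a (k + 1) - a k = 1 / N := by simp only [ha]; push_cast; ring
        simpa only [hstep] using
          abs_integral_sub_mul_right_le (ha_mono k.le_succ) (hh.mono (hcell k hk))
    _ = Λ / N := by
        rw [Finset.sum_const, Finset.card_range, nsmul_eq_mul]
        field_simp

theorem LipschitzOnWith.mul_of_abs_le {α : Type*} [PseudoMetricSpace α] {f g : α → ℝ} {s : Set α}
    {Kf Kg Mf Mg : ℝ≥0} (hf : LipschitzOnWith Kf f s) (hg : LipschitzOnWith Kg g s)
    (hfb : ∀ x ∈ s, |f x| ≤ Mf) (hgb : ∀ x ∈ s, |g x| ≤ Mg) :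
    LipschitzOnWith (Kf * Mg + Mf * Kg) (fun x => f x * g x) s := by
  refine LipschitzOnWith.of_dist_le_mul fun x hx y hy => ?_
  have hfxy := hf.dist_le_mul x hx y hy
  have hgxy := hg.dist_le_mul x hx y hy
  rw [Real.dist_eq] at hfxy hgxy ⊢
  calc |f x * g x - f y * g y| = |(f x - f y) * g x + f y * (g x - g y)| := by ring_nf
    _ ≤ |f x - f y| * |g x| + |f y| * |g x - g y| := by
        rw [← abs_mul, ← abs_mul]; exact abs_add_le _ _
    _ ≤ Kf * dist x y * Mg + Mf * (Kg * dist x y) := by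
        gcongr
        exacts [hgb x hx, hfb y hy]
    _ = ↑(Kf * Mg + Mf * Kg) * dist x y := by push_cast; ring

noncomputable def kernelIntegral (G Q : ℝ → ℝ → ℝ) (u s : ℝ) : ℝ :=
  ∫ v in (0:ℝ)..1, G v u * Q s v

section Kernel

variable {G Q : ℝ → ℝ → ℝ} {L MG MQ : ℝ≥0} {T : ℝ}

theorem abs_kernel_mul_le (hGb : ∀ u v, |G u v| ≤ MG) (hQb : ∀ t u, |Q t u| ≤ MQ)
    (u s v : ℝ) : |G v u * Q s v| ≤ (MG : ℝ) * MQ := by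
  rw [abs_mul]
  exact mul_le_mul (hGb v u) (hQb s v) (abs_nonneg _) MG.2

theorem intervalIntegrable_kernel_mul (hGm : ∀ u, Measurable fun v => G v u)
    (hGb : ∀ u v, |G u v| ≤ MG) (hQm : ∀ t, Measurable (Q t)) (hQb : ∀ t u, |Q t u| ≤ MQ)
    (u s a b : ℝ) : IntervalIntegrable (fun v => G v u * Q s v) volume a b :=
  (intervalIntegrable_const (c := (MG : ℝ) * MQ)).mono_fun
    ((hGm u).mul (hQm s)).aestronglyMeasurable
    (ae_of_all _ fun v => (abs_kernel_mul_le hGb hQb u s v).trans (le_abs_self _))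

theorem continuous_kernelIntegral (hGm : ∀ u, Measurable fun v => G v u)
    (hGb : ∀ u v, |G u v| ≤ MG) (hQm : ∀ t, Measurable (Q t)) (hQb : ∀ t u, |Q t u| ≤ MQ)
    (hQc : ∀ v, Continuous fun t => Q t v) (u : ℝ) : Continuous (kernelIntegral G Q u) :=
  continuous_of_dominated_interval (bound := fun _ => (MG : ℝ) * MQ)
    (fun s => ((hGm u).mul (hQm s)).aestronglyMeasurable.restrict)
    (fun s => ae_of_all _ fun v _ => abs_kernel_mul_le hGb hQb u s v)
    intervalIntegrable_const (ae_of_all _ fun v _ => continuous_const.mul (hQc v))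

theorem abs_kernelIntegral_sub_le (hGlip : ∀ v x y, |G v x - G v y| ≤ L * |x - y|)
    (hGm : ∀ u, Measurable fun v => G v u) (hGb : ∀ u v, |G u v| ≤ MG)
    (hQm : ∀ t, Measurable (Q t)) (hQb : ∀ t u, |Q t u| ≤ MQ) (x y s : ℝ) :
    |kernelIntegral G Q x s - kernelIntegral G Q y s| ≤ L * MQ * |x - y| := by
  have hint := intervalIntegrable_kernel_mul hGm hGb hQm hQb
  have hpt : ∀ v ∈ uIoc (0:ℝ) 1, ‖G v x * Q s v - G v y * Q s v‖ ≤ L * MQ * |x - y| := by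
    intro v _
    rw [Real.norm_eq_abs, ← sub_mul, abs_mul, mul_right_comm]
    exact mul_le_mul (hGlip v x y) (hQb s v) (abs_nonneg _)
      ((abs_nonneg _).trans (hGlip v x y))
  simpa [kernelIntegral, ← integral_sub (hint x s 0 1) (hint y s 0 1)] using
    norm_integral_le_of_norm_le_const hpt

theorem lipschitzOnWith_of_integral_equation
    (hGlip : ∀ v x y, |G v x - G v y| ≤ L * |x - y|)
    (hGm : ∀ u, Measurable fun v => G v u) (hGb : ∀ u v, |G u v| ≤ MG)
    (hQm : ∀ t, Measurable (Q t)) (hQb : ∀ t u, |Q t u| ≤ MQ)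
    (hQc : ∀ v, Continuous fun t => Q t v)
    (hQeq : ∀ t ∈ Icc 0 T, ∀ u ∈ Icc 0 1, Q t u = 1 + ∫ s in t..T, kernelIntegral G Q u s)
    {t : ℝ} (ht : t ∈ Icc 0 T) :
    LipschitzOnWith (L * MQ * T.toNNReal) (Q t) (Icc 0 1) := by
  refine LipschitzOnWith.of_dist_le_mul fun x hx y hy => ?_
  have hF := continuous_kernelIntegral hGm hGb hQm hQb hQc
  have hpt : ∀ s ∈ uIoc t T,
      ‖kernelIntegral G Q x s - kernelIntegral G Q y s‖ ≤ L * MQ * |x - y| :=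
    fun s _ => abs_kernelIntegral_sub_le hGlip hGm hGb hQm hQb x y s
  have hdiff : Q t x - Q t y = ∫ s in t..T, (kernelIntegral G Q x s - kernelIntegral G Q y s) := by
    rw [hQeq t ht x hx, hQeq t ht y hy,
      integral_sub ((hF x).intervalIntegrable t T) ((hF y).intervalIntegrable t T)]
    ring
  rw [Real.dist_eq, Real.dist_eq, hdiff]
  calc _ ≤ L * MQ * |x - y| * |T - t| := norm_integral_le_of_norm_le_const hpt
    _ ≤ L * MQ * |x - y| * T := by
        rw [abs_of_nonneg (sub_nonneg.2 ht.2)]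
        gcongr
        linarith [ht.1]
    _ = ↑(L * MQ * T.toNNReal) * |x - y| := by
        push_cast
        rw [Real.coe_toNNReal T (ht.1.trans ht.2)]
        ring

theorem abs_kernelIntegral_sub_riemannSum_le
    (hGlip₁ : ∀ u, LipschitzWith L fun v => G v u)
    (hGlip₂ : ∀ v x y, |G v x - G v y| ≤ L * |x - y|) (hGb : ∀ u v, |G u v| ≤ MG)
    (hQm : ∀ t, Measurable (Q t)) (hQb : ∀ t u, |Q t u| ≤ MQ)
    (hQc : ∀ v, Continuous fun t => Q t v)
    (hQeq : ∀ t ∈ Icc 0 T, ∀ u ∈ Icc 0 1, Q t u = 1 + ∫ s in t..T, kernelIntegral G Q u s)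
    {N : ℕ} (hN : 0 < N) (u : ℝ) {s : ℝ} (hs : s ∈ Icc 0 T) :
    |kernelIntegral G Q u s
        - 1 / N * ∑ j : Fin N, G (((j : ℕ) + 1) / N) u * Q s (((j : ℕ) + 1) / N)|
      ≤ ↑(L * MQ + MG * (L * MQ * T.toNNReal)) / N :=
  have hGm : ∀ u, Measurable fun v => G v u := fun u => (hGlip₁ u).continuous.measurable
  abs_integral_sub_riemannSum_le (((hGlip₁ u).lipschitzOnWith).mul_of_abs_le
    (lipschitzOnWith_of_integral_equation hGlip₂ hGm hGb hQm hQb hQc hQeq hs)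
    (fun v _ => hGb v u) (fun v _ => hQb s v)) hN

end Kernel

theorem gronwallBound_zero_eq_mul_one (K ε x : ℝ) :
    gronwallBound 0 K ε x = ε * gronwallBound 0 K 1 x := by
  unfold gronwallBound
  split_ifs <;> ring

theorem lipschitzWith_average {N : ℕ} {M : ℝ≥0} (A : Fin N → Fin N → ℝ)
    (hA : ∀ i j, |A i j| ≤ M) :
    LipschitzWith M fun (z : Fin N → ℝ) (i : Fin N) => 1 / (N:ℝ) * ∑ j, A i j * z j := by
  refine LipschitzWith.of_dist_le_mul fun z w => (dist_pi_le_iff (by positivity)).2 fun i => ?_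
  rw [Real.dist_eq, ← mul_sub, ← Finset.sum_sub_distrib, abs_mul]
  calc _ ≤ |1 / (N:ℝ)| * ∑ j : Fin N, M * dist z w := by
        gcongr
        refine (Finset.abs_sum_le_sum_abs _ _).trans (Finset.sum_le_sum fun j _ => ?_)
        rw [← mul_sub, abs_mul, ← Real.dist_eq]
        exact mul_le_mul (hA i j) (dist_le_pi_dist z w j) (abs_nonneg _) M.2
    _ ≤ M * dist z w := by
        rcases N.eq_zero_or_pos with rfl | hN
        · exact i.elim0
        · rw [Finset.sum_const, Finset.card_univ, Fintype.card_fin, nsmul_eq_mul,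
            abs_of_pos (by positivity)]
          field_simp
          exact le_rfl

theorem abs_sub_le_gronwallBound_of_approx_solution {N : ℕ} {M : ℝ≥0} {T ε : ℝ}
    {A : Fin N → Fin N → ℝ} (hA : ∀ i j, |A i j| ≤ M) {c : Fin N → ℝ}
    {φ y x : Fin N → ℝ → ℝ} (hφ : ∀ i, Continuous (φ i))
    (hy : ∀ i, ∀ t ∈ Icc 0 T, y i t = c i + ∫ s in t..T, φ i s)
    (hφy : ∀ i, ∀ s ∈ Icc 0 T, |φ i s - 1 / (N:ℝ) * ∑ j, A i j * y j s| ≤ ε)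
    (hx : ∀ i, ∀ t ∈ Icc 0 T, HasDerivAt (x i) (-(1 / (N:ℝ)) * ∑ j, A i j * x j t) t)
    (hxT : ∀ i, x i T = c i) :
    ∀ i, ∀ t ∈ Icc 0 T, |y i t - x i t| ≤ gronwallBound 0 M ε (T - t) := by
  intro i t ht
  have hε : 0 ≤ ε := (abs_nonneg _).trans (hφy i t ht)
  have hrev : ∀ τ ∈ Icc 0 T, T - τ ∈ Icc 0 T := fun τ hτ =>
    ⟨sub_nonneg.2 hτ.2, sub_le_self T hτ.1⟩
  set v : (Fin N → ℝ) → Fin N → ℝ := fun z i => 1 / (N:ℝ) * ∑ j, A i j * z j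
  -- `f` and `g` are `y` and `x` with time reversed, `t = T - τ`
  set f : ℝ → Fin N → ℝ := fun τ i => c i + ∫ σ in 0..τ, φ i (T - σ)
  set g : ℝ → Fin N → ℝ := fun τ i => x i (T - τ)
  have hf : ∀ τ, HasDerivAt f (fun i => φ i (T - τ)) τ := fun τ =>
    hasDerivAt_pi.2 fun i =>
      (((hφ i).comp (continuous_sub_left T)).integral_hasStrictDerivAt 0 τ).hasDerivAt.const_add _
  have hfy : ∀ τ ∈ Icc 0 T, f τ = fun i => y i (T - τ) := by
    intro τ hτ
    funext i
    simp only [f, hy i _ (hrev τ hτ), integral_comp_sub_left (φ i), sub_zero]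
  have hg : ∀ τ ∈ Icc 0 T, HasDerivAt g (v (g τ)) τ := fun τ hτ =>
    hasDerivAt_pi.2 fun i => by simpa [v, g] using (hx i _ (hrev τ hτ)).comp_const_sub T τ
  have hdist := dist_le_of_approx_trajectories_ODE (v := fun _ => v) (K := M) (εg := 0) (δ := 0)
    (fun _ => lipschitzWith_average A hA)
    (fun τ _ => (hf τ).continuousAt.continuousWithinAt) (fun τ _ => (hf τ).hasDerivWithinAt)
    (fun τ hτ => by
      rw [hfy τ (Ico_subset_Icc_self hτ)]
      exact (dist_pi_le_iff hε).2 fun i => hφy i _ (hrev τ (Ico_subset_Icc_self hτ)))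
    (fun τ hτ => (hg τ hτ).continuousAt.continuousWithinAt)
    (fun τ hτ => (hg τ (Ico_subset_Icc_self hτ)).hasDerivWithinAt)
    (fun τ _ => (dist_self _).le) (by simp [f, g, hxT])
  calc |y i t - x i t| = dist (f (T - t) i) (g (T - t) i) := by
        rw [hfy _ (hrev t ht), Real.dist_eq]
        simp only [g, sub_sub_cancel]
    _ ≤ dist (f (T - t)) (g (T - t)) := dist_le_pi_dist _ _ i
    _ ≤ gronwallBound 0 M ε (T - t) := by simpa using hdist _ (hrev t ht)

theorem stmt_8 (T L : ℝ) (hT : 0 < T) (hL : 0 ≤ L) (G Q : ℝ → ℝ → ℝ)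
    (hGb : ∃ M, ∀ u v, |G u v| ≤ M)
    (hGlip : ∀ u₁ v₁ u₂ v₂ : ℝ, |G u₁ v₁ - G u₂ v₂| ≤ L * (|u₁ - u₂| + |v₁ - v₂|))
    (hQm : ∀ t, Measurable (Q t))
    (hQb : ∃ M, ∀ t u, |Q t u| ≤ M)
    (hQc : ∀ u, Continuous fun t => Q t u)
    (hQeq : ∀ t ∈ Icc (0:ℝ) T, ∀ u ∈ Icc (0:ℝ) 1,
      Q t u = 1 + ∫ s in t..T, ∫ v in (0:ℝ)..(1:ℝ), G v u * Q s v) :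
    ∃ C > 0, ∀ N : ℕ, 0 < N → ∀ QN : Fin N → ℝ → ℝ,
      (∀ i : Fin N, ∀ t ∈ Icc (0:ℝ) T,
        HasDerivAt (QN i)
          (-(1 / (N:ℝ)) * ∑ j : Fin N, G (((j:ℕ) + 1) / N) (((i:ℕ) + 1) / N) * QN j t) t) →
      (∀ i : Fin N, QN i T = 1) →
      ∀ i : Fin N, ∀ t ∈ Icc (0:ℝ) T,
        |Q t (((i:ℕ) + 1) / N) - QN i t| ≤ C / N := by
  obtain ⟨MG, hMG⟩ := hGb
  obtain ⟨MQ, hMQ⟩ := hQb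
  lift MG to ℝ≥0 using (abs_nonneg _).trans (hMG 0 0)
  lift MQ to ℝ≥0 using (abs_nonneg _).trans (hMQ 0 0)
  lift L to ℝ≥0 using hL
  have hGlip₁ : ∀ u, LipschitzWith L fun v => G v u := fun u =>
    LipschitzWith.of_dist_le_mul fun x y => by simpa [Real.dist_eq] using hGlip x u y u
  have hGlip₂ : ∀ v x y, |G v x - G v y| ≤ L * |x - y| := fun v x y => by
    simpa using hGlip v x v y
  have hGm : ∀ u, Measurable fun v => G v u := fun u => (hGlip₁ u).continuous.measurable
  set Λ : ℝ≥0 := L * MQ + MG * (L * MQ * T.toNNReal)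
  set B := gronwallBound 0 MG 1 T
  have hB_mono : ∀ {x}, x ≤ T → gronwallBound 0 MG 1 x ≤ B :=
    fun hx => gronwallBound_mono le_rfl zero_le_one MG.2 hx
  have hB : 0 ≤ B := by simpa [gronwallBound_x0] using hB_mono hT.le
  refine ⟨Λ * B + 1, by positivity, fun N hN QN hQN hQNT i t ht => ?_⟩
  have hgrid : ∀ j : Fin N, ((j : ℕ) + 1 : ℝ) / N ∈ Icc 0 1 := fun j =>
    ⟨by positivity, div_le_one_of_le₀ (by exact_mod_cast j.isLt) (Nat.cast_nonneg N)⟩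
  calc |Q t (((i : ℕ) + 1) / N) - QN i t| ≤ gronwallBound 0 MG (Λ / N) (T - t) :=
        abs_sub_le_gronwallBound_of_approx_solution
          (A := fun i j => G (((j : ℕ) + 1) / N) (((i : ℕ) + 1) / N)) (c := fun _ => 1)
          (φ := fun i => kernelIntegral G Q (((i : ℕ) + 1) / N))
          (y := fun i t => Q t (((i : ℕ) + 1) / N)) (fun _ _ => hMG _ _)
          (fun _ => continuous_kernelIntegral hGm hMG hQm hMQ hQc _)
          (fun j s hs => hQeq s hs _ (hgrid j))
          (fun _ s hs => abs_kernelIntegral_sub_riemannSum_le hGlip₁ hGlip₂ hMG hQm hMQ hQc hQeq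
            hN _ hs) hQN hQNT i t ht
    _ = Λ / N * gronwallBound 0 MG 1 (T - t) := gronwallBound_zero_eq_mul_one _ _ _
    _ ≤ Λ / N * B := by gcongr; exact hB_mono (sub_le_self T ht.1)
    _ ≤ (Λ * B + 1) / N := by rw [div_mul_eq_mul_div]; gcongr; linarith
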